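/- Let n ≥ 1, U ⊆ ℝⁿ open, J = diag(−1,1,…,1) the n×n matrix, and λ ≠ 0 a fixed real number with D_λ = (1/2)(λ I − λ⁻¹ J). Let A, F : U → M(n,ℝ) be smooth and set ω_j = e_j F − J Fᵗ e_j J for 1 ≤ j ≤ n. Suppose P, Q : U → M(n,ℝ) are differentiable, Q(x) is invertible for every x ∈ U, and for all j: ∂_{x_j} P = P ω_j + Q D_λ J A J e_j and ∂_{x_j} Q = P e_j Aᵗ D_λ. Then X := −Q⁻¹ P is differentiable and satisfies the Bäcklund (Riccati) equation ∂_{x_j} X = X e_j Aᵗ D_λ X + X ω_j − D_λ J A J e_j for all 1 ≤ j ≤ n. -/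

import Mathlib

/- STATEMENT 6: part (2) of the Bäcklund transformation theorem (Section 3):
   if y = (P,Q) solves the linear system dy = y(ω, δAᵗD_λ; D_λJAJδ, 0) and Q is
   invertible, then X = −Q⁻¹P solves the Riccati-type Bäcklund equation
   dX = XδAᵗD_λX + Xω − D_λJAJδ. -/

noncomputable section

open Matrix

variable {n : ℕ}

/-- partial derivative ∂_{x_j} of a scalar function on ℝⁿ -/
def pd (j : Fin n) (f : (Fin n → ℝ) → ℝ) (x : Fin n → ℝ) : ℝ :=
  fderiv ℝ f x (Pi.single j 1)

/-- entrywise partial derivative ∂_{x_j} of a matrix-valued function on ℝⁿ -/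
def mpd (j : Fin n) (f : (Fin n → ℝ) → Matrix (Fin n) (Fin n) ℝ) (x : Fin n → ℝ) :
    Matrix (Fin n) (Fin n) ℝ :=
  Matrix.of fun a b => fderiv ℝ (fun y => f y a b) x (Pi.single j 1)

/-- J = diag(−1,1,…,1) -/
def Jmat (n : ℕ) : Matrix (Fin n) (Fin n) ℝ :=
  Matrix.diagonal fun i => if (i : ℕ) = 0 then (-1 : ℝ) else 1

/-- e_j : the diagonal matrix with 1 in the j-th diagonal entry and 0 elsewhere -/
def eMat (j : Fin n) : Matrix (Fin n) (Fin n) ℝ :=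
  Matrix.diagonal (Pi.single j 1)

/-- D_λ = (1/2)(λ I − λ⁻¹ J) -/
def Dlam (n : ℕ) (lam : ℝ) : Matrix (Fin n) (Fin n) ℝ :=
  (1/2 : ℝ) • (lam • (1 : Matrix (Fin n) (Fin n) ℝ) - lam⁻¹ • Jmat n)

/-- differentiability of a finite product of real-valued functions -/
lemma diffAt_finset_prod {ι : Type*} {u : Finset ι} {f : ι → (Fin n → ℝ) → ℝ}
    {x : Fin n → ℝ} (h : ∀ i ∈ u, DifferentiableAt ℝ (f i) x) :
    DifferentiableAt ℝ (fun y => ∏ i ∈ u, f i y) x := by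
  classical
  induction u using Finset.induction_on with
  | empty => simp
  | @insert _ _ hi ih =>
    simp only [Finset.prod_insert hi]
    exact (h _ (Finset.mem_insert_self _ _)).mul
      (ih fun i hiu => h i (Finset.mem_insert_of_mem hiu))

/-- differentiability of the determinant of a matrix with differentiable entries -/
lemma diffAt_det {M : (Fin n → ℝ) → Matrix (Fin n) (Fin n) ℝ} {x : Fin n → ℝ}
    (h : ∀ a b, DifferentiableAt ℝ (fun y => M y a b) x) :
    DifferentiableAt ℝ (fun y => (M y).det) x := by
  have : (fun y => (M y).det)
      = fun y => ∑ σ : Equiv.Perm (Fin n),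
          (Equiv.Perm.sign σ : ℝ) * ∏ i, M y (σ i) i := by
    funext y; exact Matrix.det_apply' (M y)
  rw [this]
  exact DifferentiableAt.fun_sum fun σ _ =>
    (differentiableAt_const _).mul (diffAt_finset_prod fun i _ => h _ _)

/-- differentiability of the adjugate entries -/
lemma diffAt_adjugate {M : (Fin n → ℝ) → Matrix (Fin n) (Fin n) ℝ} {x : Fin n → ℝ}
    (h : ∀ a b, DifferentiableAt ℝ (fun y => M y a b) x) (a b : Fin n) :
    DifferentiableAt ℝ (fun y => (M y).adjugate a b) x := by
  simp only [Matrix.adjugate_apply]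
  apply diffAt_det
  intro c d
  by_cases hc : c = b
  · subst hc
    simp only [Matrix.updateRow_self]
    exact differentiableAt_const _
  · simp only [Matrix.updateRow_ne hc]
    exact h c d

/-- differentiability of the entries of the inverse -/
lemma diffAt_inv {M : (Fin n → ℝ) → Matrix (Fin n) (Fin n) ℝ} {x : Fin n → ℝ}
    (h : ∀ a b, DifferentiableAt ℝ (fun y => M y a b) x)
    (hdet : (M x).det ≠ 0) (a b : Fin n) :
    DifferentiableAt ℝ (fun y => (M y)⁻¹ a b) x := by
  have : (fun y => (M y)⁻¹ a b)
      = fun y => ((M y).det)⁻¹ * (M y).adjugate a b := by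
    funext y
    rw [Matrix.inv_def, Matrix.smul_apply, Ring.inverse_eq_inv', smul_eq_mul]
  rw [this]
  exact ((diffAt_det h).inv hdet).mul (diffAt_adjugate h a b)

/-- product rule for `mpd` -/
lemma mpd_mul {f g : (Fin n → ℝ) → Matrix (Fin n) (Fin n) ℝ} {x : Fin n → ℝ} (j : Fin n)
    (hf : ∀ a b, DifferentiableAt ℝ (fun y => f y a b) x)
    (hg : ∀ a b, DifferentiableAt ℝ (fun y => g y a b) x) :
    mpd j (fun y => f y * g y) x = mpd j f x * g x + f x * mpd j g x := by
  ext a b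
  have hd : ∀ c, DifferentiableAt ℝ (fun y => f y a c * g y c b) x :=
    fun c => (hf a c).mul (hg c b)
  simp only [mpd, Matrix.of_apply, Matrix.add_apply, Matrix.mul_apply]
  rw [fderiv_fun_sum (fun c _ => hd c), ContinuousLinearMap.sum_apply, ← Finset.sum_add_distrib]
  refine Finset.sum_congr rfl fun c _ => ?_
  rw [fderiv_fun_mul (hf a c) (hg c b)]
  simp only [ContinuousLinearMap.add_apply, ContinuousLinearMap.smul_apply, smul_eq_mul]
  ring

/-- neg rule for `mpd` -/
lemma mpd_neg {f : (Fin n → ℝ) → Matrix (Fin n) (Fin n) ℝ} {x : Fin n → ℝ} (j : Fin n) :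
    mpd j (fun y => -f y) x = -(mpd j f x) := by
  ext a b
  simp only [mpd, Matrix.of_apply, Matrix.neg_apply]
  rw [fderiv_fun_neg]
  simp

theorem backlund_linearization (hn : 1 ≤ n) (U : Set (Fin n → ℝ)) (hU : IsOpen U)
    (lam : ℝ) (hlam : lam ≠ 0)
    (A F : (Fin n → ℝ) → Matrix (Fin n) (Fin n) ℝ)
    (hA : ∀ a b : Fin n, ContDiffOn ℝ (⊤ : ℕ∞) (fun x => A x a b) U)
    (hF : ∀ a b : Fin n, ContDiffOn ℝ (⊤ : ℕ∞) (fun x => F x a b) U)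
    (ω : Fin n → (Fin n → ℝ) → Matrix (Fin n) (Fin n) ℝ)
    (hω : ∀ j x, ω j x = eMat j * F x - Jmat n * (F x)ᵀ * eMat j * Jmat n)
    (P Q : (Fin n → ℝ) → Matrix (Fin n) (Fin n) ℝ)
    (hPdiff : ∀ x ∈ U, ∀ a b : Fin n, DifferentiableAt ℝ (fun y => P y a b) x)
    (hQdiff : ∀ x ∈ U, ∀ a b : Fin n, DifferentiableAt ℝ (fun y => Q y a b) x)
    (hQinv : ∀ x ∈ U, IsUnit (Q x))
    (hP : ∀ x ∈ U, ∀ j : Fin n,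
      mpd j P x = P x * ω j x + Q x * Dlam n lam * Jmat n * A x * Jmat n * eMat j)
    (hQ : ∀ x ∈ U, ∀ j : Fin n,
      mpd j Q x = P x * eMat j * (A x)ᵀ * Dlam n lam) :
    (∀ x ∈ U, ∀ a b : Fin n,
        DifferentiableAt ℝ (fun y => (-((Q y)⁻¹ * P y) : Matrix (Fin n) (Fin n) ℝ) a b) x)
    ∧ (∀ x ∈ U, ∀ j : Fin n,
        mpd j (fun y => -((Q y)⁻¹ * P y)) x
          = (-((Q x)⁻¹ * P x)) * eMat j * (A x)ᵀ * Dlam n lam * (-((Q x)⁻¹ * P x))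
            + (-((Q x)⁻¹ * P x)) * ω j x
            - Dlam n lam * Jmat n * A x * Jmat n * eMat j) := by
  -- determinant nonzero on U
  have hdet : ∀ x ∈ U, (Q x).det ≠ 0 := by
    intro x hx
    have := (Matrix.isUnit_iff_isUnit_det (Q x)).mp (hQinv x hx)
    exact this.ne_zero
  -- differentiability of Q⁻¹ entries
  have hQinvdiff : ∀ x ∈ U, ∀ a b, DifferentiableAt ℝ (fun y => (Q y)⁻¹ a b) x :=
    fun x hx => diffAt_inv (hQdiff x hx) (hdet x hx)
  -- differentiability of Q⁻¹ * P entries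
  have hXdiff0 : ∀ x ∈ U, ∀ a b,
      DifferentiableAt ℝ (fun y => ((Q y)⁻¹ * P y) a b) x := by
    intro x hx a b
    have : (fun y => ((Q y)⁻¹ * P y) a b)
        = fun y => ∑ c, (Q y)⁻¹ a c * P y c b := by
      funext y; exact Matrix.mul_apply
    rw [this]
    exact DifferentiableAt.fun_sum fun c _ =>
      (hQinvdiff x hx a c).mul (hPdiff x hx c b)
  have hXdiff : ∀ x ∈ U, ∀ a b,
      DifferentiableAt ℝ (fun y => (-((Q y)⁻¹ * P y) : Matrix (Fin n) (Fin n) ℝ) a b) x := by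
    intro x hx a b
    have : (fun y => (-((Q y)⁻¹ * P y) : Matrix (Fin n) (Fin n) ℝ) a b)
        = fun y => -(((Q y)⁻¹ * P y) a b) := by
      funext y; simp
    rw [this]
    exact (hXdiff0 x hx a b).neg
  refine ⟨hXdiff, ?_⟩
  intro x hx j
  -- derivative of Q⁻¹ via locality: Q⁻¹ * Q = 1 in a neighborhood of x
  have hdetcont : ContinuousAt (fun y => (Q y).det) x :=
    (diffAt_det (hQdiff x hx)).continuousAt
  have hev : ∀ᶠ y in nhds x, (Q y).det ≠ 0 :=
    hdetcont.eventually_ne (hdet x hx)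
  have hinvmul : ∀ᶠ y in nhds x, (Q y)⁻¹ * Q y = 1 := by
    filter_upwards [hev] with y hy
    exact Matrix.nonsing_inv_mul (Q y) (isUnit_iff_ne_zero.mpr hy)
  -- mpd of Q⁻¹ * Q is zero at x
  have hmpd1 : mpd j (fun y => (Q y)⁻¹ * Q y) x = 0 := by
    ext a b
    simp only [mpd, Matrix.of_apply, Matrix.zero_apply]
    have heq : (fun y => ((Q y)⁻¹ * Q y) a b) =ᶠ[nhds x]
        fun _ => (1 : Matrix (Fin n) (Fin n) ℝ) a b := by
      filter_upwards [hinvmul] with y hy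
      rw [hy]
    rw [heq.fderiv_eq, fderiv_fun_const]
    simp
  -- product rule on Q⁻¹ * Q
  have hprod : mpd j (fun y => (Q y)⁻¹ * Q y) x
      = mpd j (fun y => (Q y)⁻¹) x * Q x + (Q x)⁻¹ * mpd j Q x :=
    mpd_mul j (hQinvdiff x hx) (hQdiff x hx)
  have hQQinv : (Q x)⁻¹ * Q x = 1 :=
    Matrix.nonsing_inv_mul (Q x) (isUnit_iff_ne_zero.mpr (hdet x hx))
  have hQinvQ : Q x * (Q x)⁻¹ = 1 :=
    Matrix.mul_nonsing_inv (Q x) (isUnit_iff_ne_zero.mpr (hdet x hx))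
  -- solve for mpd j Q⁻¹
  have hmpdinv : mpd j (fun y => (Q y)⁻¹) x = -((Q x)⁻¹ * mpd j Q x * (Q x)⁻¹) := by
    have h0 : mpd j (fun y => (Q y)⁻¹) x * Q x + (Q x)⁻¹ * mpd j Q x = 0 := by
      rw [← hprod, hmpd1]
    have h1 : mpd j (fun y => (Q y)⁻¹) x * Q x = -((Q x)⁻¹ * mpd j Q x) := by
      linear_combination (norm := noncomm_ring) h0
    calc mpd j (fun y => (Q y)⁻¹) x
        = mpd j (fun y => (Q y)⁻¹) x * (Q x * (Q x)⁻¹) := by rw [hQinvQ, mul_one]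
      _ = (mpd j (fun y => (Q y)⁻¹) x * Q x) * (Q x)⁻¹ := by rw [mul_assoc]
      _ = -((Q x)⁻¹ * mpd j Q x) * (Q x)⁻¹ := by rw [h1]
      _ = -((Q x)⁻¹ * mpd j Q x * (Q x)⁻¹) := by rw [neg_mul]
  -- product rule on Q⁻¹ * P
  have hprodQP : mpd j (fun y => (Q y)⁻¹ * P y) x
      = mpd j (fun y => (Q y)⁻¹) x * P x + (Q x)⁻¹ * mpd j P x :=
    mpd_mul j (hQinvdiff x hx) (hPdiff x hx)
  have hmain : mpd j (fun y => -((Q y)⁻¹ * P y)) x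
      = -(mpd j (fun y => (Q y)⁻¹ * P y) x) := mpd_neg j
  rw [hmain, hprodQP, hmpdinv, hP x hx j, hQ x hx j]
  -- now algebra
  set Qi := (Q x)⁻¹
  set Pm := P x
  set Am := (A x)ᵀ
  set D := Dlam n lam
  set Jm := Jmat n
  set e := eMat j
  set w := ω j x
  have hc : Qi * (Q x * (D * Jm * A x * Jm * e)) = D * Jm * A x * Jm * e := by
    rw [← mul_assoc, hQQinv, one_mul]
  calc -( -(Qi * (Pm * e * Am * D) * Qi) * Pm
        + Qi * (Pm * w + Q x * D * Jm * A x * Jm * e))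
      = Qi * (Pm * e * Am * D) * Qi * Pm - Qi * (Pm * w)
        - Qi * (Q x * (D * Jm * A x * Jm * e)) := by noncomm_ring
    _ = Qi * (Pm * e * Am * D) * Qi * Pm - Qi * (Pm * w) - D * Jm * A x * Jm * e := by
        rw [hc]
    _ = -(Qi * Pm) * e * Am * D * -(Qi * Pm) + -(Qi * Pm) * w
        - D * Jm * A x * Jm * e := by noncomm_ring

end
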